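/- Let N ≥ 4 be an integer and let s = s_N^{(N−3)}. Then the hypercube I_s^{C(N,2)} is contained in Ω_N := J_N((0,π)^{C(N,2)}); that is, for every point (x_{ij})_{1≤i<j≤N} with each x_{ij} ∈ I_s, there exist φ_{ij} ∈ (0,π) (1 ≤ i < j ≤ N) such that α_{ij}(φ_{1i}, φ_{1j}, …, φ_{i−1,i}, φ_{i−1,j}, φ_{ij}) = x_{ij} for all 1 ≤ i < j ≤ N. -/

import Mathlib

open Real Finset

/-- I_s = [(π−s)/2, (π+s)/2]. -/
noncomputable def Iset (s : ℝ) : Set ℝ := Set.Icc ((Real.pi - s) / 2) ((Real.pi + s) / 2)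

/-- F(x₁,…,x_{2r}) = Σ_{m=1}^{r} cos(a_m)cos(b_m)·∏_{ℓ=1}^{m−1} sin(a_ℓ)sin(b_ℓ),
where a_m = x_{2m−1}, b_m = x_{2m}. -/
noncomputable def Fangle (a b : ℕ → ℝ) (r : ℕ) : ℝ :=
  ∑ m ∈ Finset.Icc 1 r, Real.cos (a m) * Real.cos (b m) *
    ∏ l ∈ Finset.Icc 1 (m - 1), (Real.sin (a l) * Real.sin (b l))

/-- X(x₁,…,x_{2r}) = ∏_{m=1}^{r} sin(a_m)sin(b_m). -/
noncomputable def Xangle (a b : ℕ → ℝ) (r : ℕ) : ℝ :=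
  ∏ m ∈ Finset.Icc 1 r, (Real.sin (a m) * Real.sin (b m))

/-- E(m,s) = m·sin²(s/2) − cos(s/2)^{2m} + sin(s/2). -/
noncomputable def Efun (m : ℕ) (s : ℝ) : ℝ :=
  (m : ℝ) * Real.sin (s / 2) ^ 2 - Real.cos (s / 2) ^ (2 * m) + Real.sin (s / 2)

/-- G(N,j,x,s) = (N−j−2)·sin²(s/2) − sin(x/2)·cos(s/2)^{2(N−j−2)} + sin(s/2). -/
noncomputable def Gfun (N j : ℕ) (x s : ℝ) : ℝ :=
  ((N - j - 2 : ℕ) : ℝ) * Real.sin (s / 2) ^ 2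
    - Real.sin (x / 2) * Real.cos (s / 2) ^ (2 * (N - j - 2)) + Real.sin (s / 2)

/-- The sequence s_N^{(j)}: s_N^{(0)} = inf{s > 0 : E(N−2,s) = 0},
s_N^{(j)} = inf{s > 0 : G(N,j,s_N^{(j−1)},s) = 0}. -/
noncomputable def sSeq (N : ℕ) : ℕ → ℝ
  | 0 => sInf {s : ℝ | 0 < s ∧ Efun (N - 2) s = 0}
  | j + 1 => sInf {s : ℝ | 0 < s ∧ Gfun N (j + 1) (sSeq N j) s = 0}

/-- s is N-good: for all x₁,…,x_{2(N−2)} ∈ I_s,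
I_s ⊆ α_{N−1,N}({x₁}×⋯×{x_{2(N−2)}}×(0,π)). -/
def NGood (N : ℕ) (s : ℝ) : Prop :=
  ∀ a b : ℕ → ℝ, (∀ m ∈ Finset.Icc 1 (N - 2), a m ∈ Iset s ∧ b m ∈ Iset s) →
    ∀ y ∈ Iset s, ∃ φ ∈ Set.Ioo (0 : ℝ) Real.pi,
      Real.arccos (Fangle a b (N - 2) + Real.cos φ * Xangle a b (N - 2)) = y

/-- s is (N,j)-good: for all x₁,…,x_{2(N−j−2)} ∈ I_s,
I_s ⊆ α_{N−j−1,N−j}({x₁}×⋯×{x_{2(N−j−2)}}×I_{s_N^{(j−1)}}). -/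
def NjGood (N j : ℕ) (s : ℝ) : Prop :=
  ∀ a b : ℕ → ℝ, (∀ m ∈ Finset.Icc 1 (N - j - 2), a m ∈ Iset s ∧ b m ∈ Iset s) →
    ∀ y ∈ Iset s, ∃ φ ∈ Iset (sSeq N (j - 1)),
      Real.arccos (Fangle a b (N - j - 2) + Real.cos φ * Xangle a b (N - j - 2)) = y

/-- F in the expression for α_{ij}. -/
noncomputable def Fphi (φ : ℕ → ℕ → ℝ) (i j : ℕ) : ℝ :=
  ∑ m ∈ Finset.Icc 1 (i - 1), Real.cos (φ m i) * Real.cos (φ m j) *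
    ∏ l ∈ Finset.Icc 1 (m - 1), (Real.sin (φ l i) * Real.sin (φ l j))

/-- X in the expression for α_{ij}. -/
noncomputable def Xphi (φ : ℕ → ℕ → ℝ) (i j : ℕ) : ℝ :=
  ∏ m ∈ Finset.Icc 1 (i - 1), (Real.sin (φ m i) * Real.sin (φ m j))

/-- α_{ij} = φ_{ij} if i = 1, and arccos(F + cos(φ_{ij})·X) if i ≥ 2. -/
noncomputable def alphaMap (φ : ℕ → ℕ → ℝ) (i j : ℕ) : ℝ :=
  if i = 1 then φ i j
  else Real.arccos (Fphi φ i j + Real.cos (φ i j) * Xphi φ i j)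

/-!
The angles are chosen row by row: `φ 1 j = x 1 j`, and for `i ≥ 2` the angle
`φ i j = arccos ((cos (x i j) - F) / X)` solves `α_{ij} = x_{ij}` as soon as
`|cos (x i j) - F| ≤ X`. If all angles entering `F` and `X` lie in `I_s`, then `|cos| ≤ sin (s/2)`
and `sin ≥ cos (s/2)`, so `|F| ≤ r sin²(s/2)` and `X ≥ cos (s/2)^(2r)`. The equation
`G(N, j, s^{(j-1)}, s^{(j)}) = 0` is exactly what makes `|cos φ i j| ≤ sin (s^{(j-1)}/2)` for the
row `i = N - 1 - j`, i.e. that row lands in `I_{s^{(j-1)}}`; as the `s^{(j)}` decrease, every row feeds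
the next one. For the last row, `E(N-2, s^{(0)}) = 0` together with a strict bound on `|F|` gives
`|cos φ| < 1`, i.e. `φ ∈ (0, π)`.
-/

section Iset

variable {s x : ℝ}

lemma mem_Iset_iff (hs₀ : 0 ≤ s) (hs : s ≤ π) :
    x ∈ Iset s ↔ x ∈ Set.Icc 0 π ∧ |cos x| ≤ sin (s / 2) := by
  have hlo : (π - s) / 2 ∈ Set.Icc 0 π := ⟨by linarith, by linarith⟩
  have hhi : (π + s) / 2 ∈ Set.Icc 0 π := ⟨by linarith, by linarith⟩
  have hcos_lo : cos ((π - s) / 2) = sin (s / 2) := by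
    rw [show (π - s) / 2 = π / 2 - s / 2 by ring, cos_pi_div_two_sub]
  have hcos_hi : cos ((π + s) / 2) = -sin (s / 2) := by
    rw [show (π + s) / 2 = s / 2 + π / 2 by ring, cos_add_pi_div_two]
  constructor
  · rintro ⟨h₁, h₂⟩
    have hx : x ∈ Set.Icc 0 π := ⟨by linarith, by linarith⟩
    refine ⟨hx, abs_le.mpr ⟨?_, ?_⟩⟩
    · rw [← hcos_hi]; exact strictAntiOn_cos.antitoneOn hx hhi h₂
    · rw [← hcos_lo]; exact strictAntiOn_cos.antitoneOn hlo hx h₁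
  · rintro ⟨hx, hcos⟩
    obtain ⟨h₁, h₂⟩ := abs_le.mp hcos
    exact ⟨(strictAntiOn_cos.le_iff_ge hx hlo).mp (hcos_lo ▸ h₂),
      (strictAntiOn_cos.le_iff_ge hhi hx).mp (hcos_hi ▸ h₁)⟩

lemma abs_cos_le_of_mem_Iset (hs₀ : 0 ≤ s) (hs : s ≤ π) (hx : x ∈ Iset s) :
    |cos x| ≤ sin (s / 2) :=
  ((mem_Iset_iff hs₀ hs).mp hx).2

lemma cos_half_le_sin_of_mem_Iset (hs₀ : 0 ≤ s) (hs : s ≤ π) (hx : x ∈ Iset s) :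
    cos (s / 2) ≤ sin x := by
  obtain ⟨⟨hx₀, hxπ⟩, hcos⟩ := (mem_Iset_iff hs₀ hs).mp hx
  have hC : 0 ≤ cos (s / 2) := cos_nonneg_of_mem_Icc ⟨by linarith, by linarith⟩
  have hsq : cos (s / 2) ^ 2 ≤ sin x ^ 2 := by
    nlinarith [sin_sq_add_cos_sq x, sin_sq_add_cos_sq (s / 2), sq_abs (cos x),
      abs_nonneg (cos x)]
  exact (pow_le_pow_iff_left₀ hC (sin_nonneg_of_nonneg_of_le_pi hx₀ hxπ) two_ne_zero).mp hsq

lemma Iset_subset_Iset {s' : ℝ} (h : s ≤ s') : Iset s ⊆ Iset s' :=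
  Set.Icc_subset_Icc (by linarith) (by linarith)

lemma Iset_subset_Ioo (hs : s < π) : Iset s ⊆ Set.Ioo 0 π :=
  fun _ ⟨h₁, h₂⟩ => ⟨by linarith, by linarith⟩

lemma arccos_mem_Iset {ρ : ℝ} (hs₀ : 0 ≤ s) (hs : s ≤ π) (hρ : |ρ| ≤ sin (s / 2)) :
    arccos ρ ∈ Iset s := by
  have hρ₁ := abs_le.mp (hρ.trans (sin_le_one _))
  refine (mem_Iset_iff hs₀ hs).mpr ⟨⟨arccos_nonneg ρ, arccos_le_pi ρ⟩, ?_⟩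
  rwa [cos_arccos hρ₁.1 hρ₁.2]

end Iset

@[to_additive]
lemma prod_Icc_eq_prod_range_succ {M : Type*} [CommMonoid M] (f : ℕ → M) (n : ℕ) :
    ∏ m ∈ Icc 1 n, f m = ∏ k ∈ range n, f (k + 1) := by
  rw [← Ico_add_one_right_eq_Icc, prod_Ico_eq_prod_range]
  simp [add_comm]

section Spherical

variable {a b : ℕ → ℝ} {r : ℕ} {c : ℝ}

lemma Fangle_congr {a' b' : ℕ → ℝ} (ha : ∀ m ∈ Icc 1 r, a m = a' m)
    (hb : ∀ m ∈ Icc 1 r, b m = b' m) : Fangle a b r = Fangle a' b' r := by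
  refine sum_congr rfl fun m hm => ?_
  have hsub : ∀ l ∈ Icc 1 (m - 1), l ∈ Icc 1 r := fun l hl => by
    simp only [mem_Icc] at hl hm ⊢; omega
  rw [ha m hm, hb m hm, prod_congr rfl fun l hl => by rw [ha l (hsub l hl), hb l (hsub l hl)]]

lemma Xangle_congr {a' b' : ℕ → ℝ} (ha : ∀ m ∈ Icc 1 r, a m = a' m)
    (hb : ∀ m ∈ Icc 1 r, b m = b' m) : Xangle a b r = Xangle a' b' r :=
  prod_congr rfl fun m hm => by rw [ha m hm, hb m hm]

lemma Fangle_succ (a b : ℕ → ℝ) (r : ℕ) :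
    Fangle a b (r + 1) = cos (a 1) * cos (b 1) +
      sin (a 1) * sin (b 1) * Fangle (fun m => a (m + 1)) (fun m => b (m + 1)) r := by
  simp only [Fangle, sum_Icc_eq_sum_range_succ, prod_Icc_eq_prod_range_succ, Nat.add_sub_cancel,
    sum_range_succ', prod_range_succ', prod_range_zero, mul_sum]
  rw [add_comm]
  congr 1
  · simp
  · refine sum_congr rfl fun k _ => by ring

lemma abs_cos_mul_cos_add_abs_sin_mul_sin_le_one (x y : ℝ) :
    |cos x * cos y| + |sin x * sin y| ≤ 1 := by
  rw [abs_mul, abs_mul]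
  nlinarith [sq_nonneg (|cos x| - |cos y|), sq_nonneg (|sin x| - |sin y|), sin_sq_add_cos_sq x,
    sin_sq_add_cos_sq y, sq_abs (cos x), sq_abs (cos y), sq_abs (sin x), sq_abs (sin y)]

lemma abs_Fangle_le (ha : ∀ m ∈ Icc 1 r, |cos (a m)| ≤ c)
    (hb : ∀ m ∈ Icc 1 r, |cos (b m)| ≤ c) : |Fangle a b r| ≤ r * c ^ 2 := by
  induction r generalizing a b with
  | zero => simp [Fangle]
  | succ r ih =>
    have h1 : (1 : ℕ) ∈ Icc 1 (r + 1) := by simp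
    have hshift : ∀ m ∈ Icc 1 r, m + 1 ∈ Icc 1 (r + 1) := fun m hm => by
      simp only [mem_Icc] at hm ⊢; omega
    have hF := ih (fun m hm => ha _ (hshift m hm)) (fun m hm => hb _ (hshift m hm))
    have hu : |cos (a 1) * cos (b 1)| ≤ c ^ 2 := by
      rw [abs_mul, sq]
      exact mul_le_mul (ha 1 h1) (hb 1 h1) (abs_nonneg _) ((abs_nonneg _).trans (ha 1 h1))
    have hq : |sin (a 1) * sin (b 1)| ≤ 1 := by
      rw [abs_mul]; exact mul_le_one₀ (abs_sin_le_one _) (abs_nonneg _) (abs_sin_le_one _)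
    rw [Fangle_succ]
    push_cast
    calc _ ≤ |cos (a 1) * cos (b 1)| + |sin (a 1) * sin (b 1)| *
          |Fangle (fun m => a (m + 1)) (fun m => b (m + 1)) r| := by
          rw [← abs_mul]; exact abs_add_le _ _
      _ ≤ c ^ 2 + 1 * (r * c ^ 2) := by gcongr
      _ = _ := by ring

/-- The first two terms of `Fangle` cannot both reach the bound `c ^ 2`: if `|cos (a 1) cos (b 1)|`
equals `c ^ 2 > 0`, then `|sin (a 1) sin (b 1)| ≤ 1 - c ^ 2` damps all later terms. -/
lemma abs_Fangle_lt (hr : 2 ≤ r) (hc : 0 < c) (ha : ∀ m ∈ Icc 1 r, |cos (a m)| ≤ c)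
    (hb : ∀ m ∈ Icc 1 r, |cos (b m)| ≤ c) : |Fangle a b r| < r * c ^ 2 := by
  obtain ⟨r, rfl⟩ : ∃ k, r = k + 1 := ⟨r - 1, by omega⟩
  have h1 : (1 : ℕ) ∈ Icc 1 (r + 1) := by simp
  have hshift : ∀ m ∈ Icc 1 r, m + 1 ∈ Icc 1 (r + 1) := fun m hm => by
    simp only [mem_Icc] at hm ⊢; omega
  have hF := abs_Fangle_le (fun m hm => ha _ (hshift m hm)) (fun m hm => hb _ (hshift m hm))
  have hu : |cos (a 1) * cos (b 1)| ≤ c ^ 2 := by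
    rw [abs_mul, sq]
    exact mul_le_mul (ha 1 h1) (hb 1 h1) (abs_nonneg _) ((abs_nonneg _).trans (ha 1 h1))
  have huq := abs_cos_mul_cos_add_abs_sin_mul_sin_le_one (a 1) (b 1)
  have hr' : (1 : ℝ) ≤ r := by exact_mod_cast (by omega : 1 ≤ r)
  rw [Fangle_succ]
  push_cast
  calc _ ≤ |cos (a 1) * cos (b 1)| + |sin (a 1) * sin (b 1)| *
        |Fangle (fun m => a (m + 1)) (fun m => b (m + 1)) r| := by
        rw [← abs_mul]; exact abs_add_le _ _
    _ ≤ |cos (a 1) * cos (b 1)| + |sin (a 1) * sin (b 1)| * (r * c ^ 2) := by gcongr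
    _ < (r + 1) * c ^ 2 := by
        have hrc : 0 < r * c ^ 2 := by positivity
        rcases hu.lt_or_eq with hu | hu
        · have hq : |sin (a 1) * sin (b 1)| * (r * c ^ 2) ≤ r * c ^ 2 :=
            mul_le_of_le_one_left hrc.le (by linarith [abs_nonneg (cos (a 1) * cos (b 1))])
          linarith
        · have hq : |sin (a 1) * sin (b 1)| * (r * c ^ 2) ≤ (1 - c ^ 2) * (r * c ^ 2) :=
            mul_le_mul_of_nonneg_right (by linarith) hrc.le
          nlinarith [mul_pos (pow_pos hc 2) hrc]

lemma pow_le_Xangle {C : ℝ} (hC : 0 ≤ C) (ha : ∀ m ∈ Icc 1 r, C ≤ sin (a m))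
    (hb : ∀ m ∈ Icc 1 r, C ≤ sin (b m)) : C ^ (2 * r) ≤ Xangle a b r := by
  calc C ^ (2 * r) = ∏ _m ∈ Icc 1 r, C * C := by
        rw [prod_const, Nat.card_Icc, Nat.add_sub_cancel, pow_mul, sq]
    _ ≤ Xangle a b r := prod_le_prod (fun _ _ => mul_nonneg hC hC)
        fun m hm => mul_le_mul (ha m hm) (hb m hm) hC (hC.trans (ha m hm))

end Spherical

lemma arccos_add_cos_arccos_mul {F X y : ℝ} (hX : 0 < X) (hy : y ∈ Set.Icc 0 π)
    (h : |cos y - F| ≤ X) : arccos (F + cos (arccos ((cos y - F) / X)) * X) = y := by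
  have hρ : |(cos y - F) / X| ≤ 1 := by rwa [abs_div, abs_of_pos hX, div_le_one hX]
  rw [cos_arccos (abs_le.mp hρ).1 (abs_le.mp hρ).2, div_mul_cancel₀ _ hX.ne', add_sub_cancel,
    arccos_cos hy.1 hy.2]

section Goodness

variable {N j : ℕ} {s : ℝ}

lemma nGood_of_Efun_nonpos (hN : 4 ≤ N) (hs₀ : 0 < s) (hs : s < π)
    (hE : Efun (N - 2) s ≤ 0) : NGood N s := by
  intro a b hab y hy
  have hc : 0 < sin (s / 2) := sin_pos_of_pos_of_lt_pi (by linarith) (by linarith)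
  have hC : 0 < cos (s / 2) := cos_pos_of_mem_Ioo ⟨by linarith, by linarith⟩
  have hF : |Fangle a b (N - 2)| < (N - 2 : ℕ) * sin (s / 2) ^ 2 :=
    abs_Fangle_lt (by omega) hc (fun m hm => abs_cos_le_of_mem_Iset hs₀.le hs.le (hab m hm).1)
      (fun m hm => abs_cos_le_of_mem_Iset hs₀.le hs.le (hab m hm).2)
  have hX : cos (s / 2) ^ (2 * (N - 2)) ≤ Xangle a b (N - 2) :=
    pow_le_Xangle hC.le (fun m hm => cos_half_le_sin_of_mem_Iset hs₀.le hs.le (hab m hm).1)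
      (fun m hm => cos_half_le_sin_of_mem_Iset hs₀.le hs.le (hab m hm).2)
  have hXpos : 0 < Xangle a b (N - 2) := (pow_pos hC _).trans_le hX
  obtain ⟨hyπ, hcos⟩ := (mem_Iset_iff hs₀.le hs.le).mp hy
  have hlt : |cos y - Fangle a b (N - 2)| < Xangle a b (N - 2) := by
    unfold Efun at hE
    calc _ ≤ |cos y| + |Fangle a b (N - 2)| := abs_sub _ _
      _ < sin (s / 2) + (N - 2 : ℕ) * sin (s / 2) ^ 2 := by linarith
      _ ≤ cos (s / 2) ^ (2 * (N - 2)) := by linarith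
      _ ≤ _ := hX
  have hρ : |(cos y - Fangle a b (N - 2)) / Xangle a b (N - 2)| < 1 := by
    rwa [abs_div, abs_of_pos hXpos, div_lt_one hXpos]
  exact ⟨_, ⟨arccos_pos.mpr (abs_lt.mp hρ).2, arccos_lt_pi.mpr (abs_lt.mp hρ).1⟩,
    arccos_add_cos_arccos_mul hXpos hyπ hlt.le⟩

lemma njGood_of_Gfun_nonpos (hs₀ : 0 ≤ s) (hs : s < π) (hs' : sSeq N (j - 1) ∈ Set.Icc 0 π)
    (hG : Gfun N j (sSeq N (j - 1)) s ≤ 0) : NjGood N j s := by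
  intro a b hab y hy
  have hC : 0 < cos (s / 2) := cos_pos_of_mem_Ioo ⟨by linarith, by linarith⟩
  have ht : 0 ≤ sin (sSeq N (j - 1) / 2) :=
    sin_nonneg_of_nonneg_of_le_pi (by linarith [hs'.1]) (by linarith [hs'.2])
  have hF : |Fangle a b (N - j - 2)| ≤ (N - j - 2 : ℕ) * sin (s / 2) ^ 2 :=
    abs_Fangle_le (fun m hm => abs_cos_le_of_mem_Iset hs₀ hs.le (hab m hm).1)
      (fun m hm => abs_cos_le_of_mem_Iset hs₀ hs.le (hab m hm).2)
  have hX : cos (s / 2) ^ (2 * (N - j - 2)) ≤ Xangle a b (N - j - 2) :=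
    pow_le_Xangle hC.le (fun m hm => cos_half_le_sin_of_mem_Iset hs₀ hs.le (hab m hm).1)
      (fun m hm => cos_half_le_sin_of_mem_Iset hs₀ hs.le (hab m hm).2)
  have hXpos : 0 < Xangle a b (N - j - 2) := (pow_pos hC _).trans_le hX
  obtain ⟨hyπ, hcos⟩ := (mem_Iset_iff hs₀ hs.le).mp hy
  have hle : |cos y - Fangle a b (N - j - 2)| ≤
      sin (sSeq N (j - 1) / 2) * Xangle a b (N - j - 2) := by
    unfold Gfun at hG
    calc _ ≤ |cos y| + |Fangle a b (N - j - 2)| := abs_sub _ _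
      _ ≤ sin (s / 2) + (N - j - 2 : ℕ) * sin (s / 2) ^ 2 := by linarith
      _ ≤ sin (sSeq N (j - 1) / 2) * cos (s / 2) ^ (2 * (N - j - 2)) := by linarith
      _ ≤ _ := mul_le_mul_of_nonneg_left hX ht
  have hρ : |(cos y - Fangle a b (N - j - 2)) / Xangle a b (N - j - 2)| ≤
      sin (sSeq N (j - 1) / 2) := by
    rwa [abs_div, abs_of_pos hXpos, div_le_iff₀ hXpos]
  exact ⟨_, arccos_mem_Iset hs'.1 hs'.2 hρ, arccos_add_cos_arccos_mul hXpos hyπ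
    (hle.trans (mul_le_of_le_one_left hXpos.le (sin_le_one _)))⟩

end Goodness

lemma sInf_pos_roots_mem {f : ℝ → ℝ} (hf : Continuous f) (h₀ : f 0 < 0) {b : ℝ} (hb : 0 ≤ b)
    (hfb : 0 ≤ f b) :
    sInf {s | 0 < s ∧ f s = 0} ∈ {s | 0 < s ∧ f s = 0} ∧ sInf {s | 0 < s ∧ f s = 0} ≤ b := by
  obtain ⟨t, ht, hft⟩ := intermediate_value_Icc hb hf.continuousOn ⟨h₀.le, hfb⟩
  -- since `f 0 ≠ 0`, the positive roots are all nonnegative roots, a closed set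
  have hroots : {s | 0 < s ∧ f s = 0} = Set.Ici 0 ∩ f ⁻¹' {0} := by
    ext s
    refine ⟨fun h => ⟨h.1.le, h.2⟩, fun ⟨hs, hfs⟩ => ⟨hs.lt_of_ne ?_, hfs⟩⟩
    rintro rfl
    exact h₀.ne hfs
  have htS : t ∈ {s | 0 < s ∧ f s = 0} := by rw [hroots]; exact ⟨ht.1, hft⟩
  have hbdd : BddBelow {s | 0 < s ∧ f s = 0} := ⟨0, fun _ hs => hs.1.le⟩
  refine ⟨IsClosed.csInf_mem ?_ ⟨t, htS⟩ hbdd, (csInf_le hbdd htS).trans ht.2⟩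
  rw [hroots]
  exact isClosed_Ici.inter (isClosed_singleton.preimage hf)

section sSeq

variable {N : ℕ}

lemma sSeq_zero_mem (hN : 4 ≤ N) : sSeq N 0 ∈ Set.Ioo 0 π ∧ Efun (N - 2) (sSeq N 0) = 0 := by
  have hπ : 0 < Efun (N - 2) π := by
    rw [Efun, sin_pi_div_two, cos_pi_div_two, zero_pow (by omega)]
    have := (N - 2).cast_nonneg (α := ℝ)
    linarith
  obtain ⟨⟨hpos, hroot⟩, hle⟩ := sInf_pos_roots_mem (by unfold Efun; fun_prop)
    (by simp [Efun]) pi_pos.le hπ.le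
  exact ⟨⟨hpos, hle.lt_of_ne fun h => hπ.ne' (h ▸ hroot)⟩, hroot⟩

lemma sSeq_succ_mem {j : ℕ} (hj : sSeq N j ∈ Set.Ioo 0 π) :
    sSeq N (j + 1) ∈ Set.Ioc 0 (sSeq N j) ∧
      Gfun N (j + 1) (sSeq N j) (sSeq N (j + 1)) = 0 := by
  have ht : 0 < sin (sSeq N j / 2) := sin_pos_of_pos_of_lt_pi (by linarith [hj.1])
    (by linarith [hj.2, pi_pos])
  have hcos : cos (sSeq N j / 2) ^ (2 * (N - (j + 1) - 2)) ≤ 1 := by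
    rw [pow_mul]; exact pow_le_one₀ (sq_nonneg _) (cos_sq_le_one _)
  have hb : 0 ≤ Gfun N (j + 1) (sSeq N j) (sSeq N j) := by
    unfold Gfun
    nlinarith [sq_nonneg (sin (sSeq N j / 2)), (N - (j + 1) - 2 : ℕ).cast_nonneg (α := ℝ)]
  obtain ⟨⟨hpos, hroot⟩, hle⟩ := sInf_pos_roots_mem (by unfold Gfun; fun_prop)
    (by simpa [Gfun] using ht) hj.1.le hb
  exact ⟨⟨hpos, hle⟩, hroot⟩

lemma sSeq_mem_Ioo (hN : 4 ≤ N) (j : ℕ) : sSeq N j ∈ Set.Ioo 0 π := by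
  induction j with
  | zero => exact (sSeq_zero_mem hN).1
  | succ j ih =>
    obtain ⟨⟨hpos, hle⟩, -⟩ := sSeq_succ_mem ih
    exact ⟨hpos, hle.trans_lt ih.2⟩

lemma sSeq_antitone (hN : 4 ≤ N) : Antitone (sSeq N) :=
  antitone_nat_of_succ_le fun j => (sSeq_succ_mem (sSeq_mem_Ioo hN j)).1.2

lemma nGood_sSeq_zero (hN : 4 ≤ N) : NGood N (sSeq N 0) :=
  nGood_of_Efun_nonpos hN (sSeq_mem_Ioo hN 0).1 (sSeq_mem_Ioo hN 0).2 (sSeq_zero_mem hN).2.le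

lemma njGood_sSeq_succ (hN : 4 ≤ N) (j : ℕ) : NjGood N (j + 1) (sSeq N (j + 1)) :=
  njGood_of_Gfun_nonpos (sSeq_mem_Ioo hN (j + 1)).1.le (sSeq_mem_Ioo hN (j + 1)).2
    (Set.Ioo_subset_Icc_self (sSeq_mem_Ioo hN j)) (sSeq_succ_mem (sSeq_mem_Ioo hN j)).2.le

end sSeq

lemma alphaMap_congr {φ ψ : ℕ → ℕ → ℝ} {i : ℕ} (h : ∀ m ≤ i, φ m = ψ m) (j : ℕ) :
    alphaMap φ i j = alphaMap ψ i j := by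
  have hrows : ∀ k, ∀ m ∈ Icc 1 (i - 1), φ m k = ψ m k := fun k m hm =>
    congrFun (h m (by simp only [mem_Icc] at hm; omega)) k
  have hF : Fphi φ i j = Fphi ψ i j := Fangle_congr (hrows i) (hrows j)
  have hX : Xphi φ i j = Xphi ψ i j := Xangle_congr (hrows i) (hrows j)
  simp only [alphaMap, hF, hX, h i le_rfl]

lemma alphaMap_update_self (φ : ℕ → ℕ → ℝ) (ψ : ℕ → ℝ) {r : ℕ} (hr : r ≠ 0) (j : ℕ) :
    alphaMap (Function.update φ (r + 1) ψ) (r + 1) j =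
      arccos (Fangle (fun m => φ m (r + 1)) (fun m => φ m j) r +
        cos (ψ j) * Xangle (fun m => φ m (r + 1)) (fun m => φ m j) r) := by
  have hrows : ∀ k, ∀ m ∈ Icc 1 r, Function.update φ (r + 1) ψ m k = φ m k := fun k m hm => by
    rw [Function.update_of_ne (by simp only [mem_Icc] at hm; omega)]
  have hF : Fphi (Function.update φ (r + 1) ψ) (r + 1) j =
      Fangle (fun m => φ m (r + 1)) (fun m => φ m j) r :=
    Fangle_congr (hrows (r + 1)) (hrows j)
  have hX : Xphi (Function.update φ (r + 1) ψ) (r + 1) j =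
      Xangle (fun m => φ m (r + 1)) (fun m => φ m j) r :=
    Xangle_congr (hrows (r + 1)) (hrows j)
  simp only [alphaMap, hF, hX, Function.update_self, if_neg (by omega : r + 1 ≠ 1)]

def RowSolved (N : ℕ) (x φ : ℕ → ℕ → ℝ) (i : ℕ) : Prop :=
  ∀ j, i < j → j ≤ N → φ i j ∈ Set.Ioo 0 π ∧ alphaMap φ i j = x i j ∧
    (i ≤ N - 2 → φ i j ∈ Iset (sSeq N (N - 2 - i)))

section RowSolved

variable {N : ℕ} {x φ : ℕ → ℕ → ℝ}

lemma rowSolved_update_of_lt {i m : ℕ} {ψ : ℕ → ℝ} (hm : m < i) :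
    RowSolved N x (Function.update φ i ψ) m ↔ RowSolved N x φ m := by
  have hrows : ∀ k ≤ m, Function.update φ i ψ k = φ k := fun k hk =>
    Function.update_of_ne (by omega) _ _
  simp only [RowSolved, hrows m le_rfl, alphaMap_congr hrows]

lemma mem_Iset_of_rowSolved (hN : 4 ≤ N) {r : ℕ} (hr : r + 1 < N)
    (hφ : ∀ m, 1 ≤ m → m ≤ r → RowSolved N x φ m) :
    ∀ k, r < k → k ≤ N → ∀ m ∈ Icc 1 r, φ m k ∈ Iset (sSeq N (N - 2 - r)) := by
  intro k hk hkN m hm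
  simp only [mem_Icc] at hm
  exact Iset_subset_Iset (sSeq_antitone hN (by omega))
    ((hφ m hm.1 hm.2 k (by omega) hkN).2.2 (by omega))

lemma exists_rowSolved_one (hN : 4 ≤ N)
    (hx : ∀ i j, 1 ≤ i → i < j → j ≤ N → x i j ∈ Iset (sSeq N (N - 3))) :
    ∃ ψ, RowSolved N x (Function.update φ 1 ψ) 1 := by
  refine ⟨x 1, fun j hj hjN => ?_⟩
  have hx₁ := hx 1 j le_rfl hj hjN
  simp only [alphaMap, Function.update_self, if_pos]
  exact ⟨Iset_subset_Ioo (sSeq_mem_Ioo hN _).2 hx₁, trivial,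
    fun _ => by rwa [show N - 2 - 1 = N - 3 by omega]⟩

lemma exists_rowSolved_of_lt (hN : 4 ≤ N)
    (hx : ∀ i j, 1 ≤ i → i < j → j ≤ N → x i j ∈ Iset (sSeq N (N - 3)))
    {r : ℕ} (hr : r ≠ 0) (hrN : r + 2 < N)
    (hφ : ∀ m, 1 ≤ m → m ≤ r → RowSolved N x φ m) :
    ∃ ψ, RowSolved N x (Function.update φ (r + 1) ψ) (r + 1) := by
  obtain ⟨l, hl⟩ : ∃ l, N - 2 - r = l + 1 := ⟨N - 3 - r, by omega⟩
  have hgood := njGood_sSeq_succ hN l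
  rw [NjGood, show N - (l + 1) - 2 = r by omega, Nat.add_sub_cancel] at hgood
  have hin := mem_Iset_of_rowSolved hN (by omega) hφ
  rw [hl] at hin
  have hrow : ∀ j, r + 1 < j → j ≤ N → ∃ θ ∈ Iset (sSeq N l),
      arccos (Fangle (fun m => φ m (r + 1)) (fun m => φ m j) r +
        cos θ * Xangle (fun m => φ m (r + 1)) (fun m => φ m j) r) = x (r + 1) j :=
    fun j hj hjN => hgood _ _
      (fun m hm => ⟨hin _ (by omega) (by omega) m hm, hin j (by omega) hjN m hm⟩) _
      (Iset_subset_Iset (sSeq_antitone hN (by omega)) (hx _ j (by omega) hj hjN))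
  choose! ψ hψ hψx using hrow
  refine ⟨ψ, fun j hj hjN => ?_⟩
  have hl' : N - 2 - (r + 1) = l := by omega
  rw [alphaMap_update_self φ ψ hr, Function.update_self, hl']
  exact ⟨Iset_subset_Ioo (sSeq_mem_Ioo hN l).2 (hψ j hj hjN), hψx j hj hjN,
    fun _ => hψ j hj hjN⟩

lemma exists_rowSolved_last (hN : 4 ≤ N)
    (hx : ∀ i j, 1 ≤ i → i < j → j ≤ N → x i j ∈ Iset (sSeq N (N - 3)))
    (hφ : ∀ m, 1 ≤ m → m ≤ N - 2 → RowSolved N x φ m) :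
    ∃ ψ, RowSolved N x (Function.update φ (N - 2 + 1) ψ) (N - 2 + 1) := by
  have hgood := nGood_sSeq_zero hN
  have hrow : ∀ j, N - 2 + 1 < j → j ≤ N → ∃ θ ∈ Set.Ioo 0 π,
      arccos (Fangle (fun m => φ m (N - 2 + 1)) (fun m => φ m j) (N - 2) +
        cos θ * Xangle (fun m => φ m (N - 2 + 1)) (fun m => φ m j) (N - 2)) = x (N - 2 + 1) j := by
    intro j hj hjN
    have hin := mem_Iset_of_rowSolved hN (by omega) hφ
    rw [Nat.sub_self] at hin
    exact hgood _ _ (fun m hm => ⟨hin _ (by omega) (by omega) m hm, hin j (by omega) hjN m hm⟩) _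
      (Iset_subset_Iset (sSeq_antitone hN (Nat.zero_le _)) (hx _ j (by omega) hj hjN))
  choose! ψ hψ hψx using hrow
  refine ⟨ψ, fun j hj hjN => ?_⟩
  rw [alphaMap_update_self φ ψ (by omega), Function.update_self]
  exact ⟨hψ j hj hjN, hψx j hj hjN, fun h => absurd h (by omega)⟩

lemma exists_rowSolved (hN : 4 ≤ N)
    (hx : ∀ i j, 1 ≤ i → i < j → j ≤ N → x i j ∈ Iset (sSeq N (N - 3)))
    {i : ℕ} (hi : 1 ≤ i) (hφ : ∀ m, 1 ≤ m → m < i → RowSolved N x φ m) :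
    ∃ ψ, RowSolved N x (Function.update φ i ψ) i := by
  obtain ⟨r, rfl⟩ : ∃ r, i = r + 1 := ⟨i - 1, by omega⟩
  rcases Nat.eq_zero_or_pos r with rfl | hr
  · exact exists_rowSolved_one hN hx
  rcases lt_trichotomy (r + 2) N with hrN | hrN | hrN
  · exact exists_rowSolved_of_lt hN hx hr.ne' hrN fun m hm hmr => hφ m hm (by omega)
  · obtain rfl : r = N - 2 := by omega
    exact exists_rowSolved_last hN hx fun m hm hmr => hφ m hm (by omega)
  · exact ⟨fun _ => 0, fun j hj hjN => absurd hjN (by omega)⟩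

lemma exists_rowsSolved (hN : 4 ≤ N)
    (hx : ∀ i j, 1 ≤ i → i < j → j ≤ N → x i j ∈ Iset (sSeq N (N - 3))) (n : ℕ) :
    ∃ φ : ℕ → ℕ → ℝ, ∀ i, 1 ≤ i → i ≤ n → RowSolved N x φ i := by
  induction n with
  | zero => exact ⟨fun _ _ => 0, fun i hi hin => absurd hin (by omega)⟩
  | succ n ih =>
    obtain ⟨φ, hφ⟩ := ih
    obtain ⟨ψ, hψ⟩ := exists_rowSolved hN hx (Nat.succ_pos n)
      fun m hm hmn => hφ m hm (by omega)
    refine ⟨Function.update φ (n + 1) ψ, fun i hi hin => ?_⟩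
    rcases hin.lt_or_eq with hin | rfl
    · exact (rowSolved_update_of_lt hin).mpr (hφ i hi (by omega))
    · exact hψ

end RowSolved

/-- with s = s_N^{(N−3)}, the hypercube I_s^{C(N,2)} is contained in
Ω_N = J_N((0,π)^{C(N,2)}). -/
theorem hypercube_subset_OmegaN (N : ℕ) (hN : 4 ≤ N) (x : ℕ → ℕ → ℝ)
    (hx : ∀ i j : ℕ, 1 ≤ i → i < j → j ≤ N → x i j ∈ Iset (sSeq N (N - 3))) :
    ∃ φ : ℕ → ℕ → ℝ, ∀ i j : ℕ, 1 ≤ i → i < j → j ≤ N →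
      φ i j ∈ Set.Ioo (0 : ℝ) Real.pi ∧ alphaMap φ i j = x i j := by
  obtain ⟨φ, hφ⟩ := exists_rowsSolved hN hx N
  exact ⟨φ, fun i j hi hij hjN => (hφ i hi (by omega) j hij hjN).imp_right And.left⟩
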